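/- arXiv:2002.08181 — 2 statements merged into one kernel-verified Lean document; each statement's English description precedes it below -/
import Mathlib

section
/- If a poset Q is such that every nonempty chain in C with the reversed order contains a smallest element (i.e., (C, ⪰) is well ordered in the sense that every chain has a maximal element under ⪯), then C has a unique Pareto-minimal subset that is Pareto-equivalent to C. -/
def SetDom {S : Type*} [PartialOrder S] (C C' : Set S) : Prop :=
  ∀ c ∈ C, ∃ c' ∈ C', c ≤ c'

theorem unique_pareto_minimal_equivalent_of_wellOrdered
    {S : Type*} [PartialOrder S] (C : Set S)
    (hchain : ∀ T ⊆ C, IsChain (· ≤ ·) T → T.Nonempty → ∃ m ∈ T, ∀ x ∈ T, x ≤ m) :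
    ∃! D : Set S,
      D ⊆ C ∧ IsAntichain (· ≤ ·) D ∧ SetDom C D ∧ SetDom D C := by
  set M : Set S := {x ∈ C | ∀ y ∈ C, x ≤ y → x = y} with hM
  have hMC : M ⊆ C := fun x hx => hx.1
  -- every element of C is dominated by a maximal element
  have hdom : ∀ c ∈ C, ∃ m ∈ M, c ≤ m := by
    intro c hc
    obtain ⟨m, hcm, hm, hmax⟩ := zorn_le_nonempty₀ {x ∈ C | c ≤ x}
      (by
        intro T hT hTchain y hy
        obtain ⟨u, huT, hub⟩ := hchain T (fun t ht => (hT ht).1) hTchain ⟨y, hy⟩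
        exact ⟨u, hT huT, hub⟩) c ⟨hc, le_refl c⟩
    refine ⟨m, ⟨hm.1, ?_⟩, hcm⟩
    intro z hz hmz
    exact le_antisymm hmz (hmax ⟨hz, hcm.trans hmz⟩ hmz)
  refine ⟨M, ⟨hMC, ?_, hdom, fun d hd => ⟨d, hd.1, le_refl d⟩⟩, ?_⟩
  · intro x hx y hy hxy hle
    exact hxy (hx.2 y (hMC hy) hle)
  · rintro D ⟨hDC, hanti, hCD, _⟩
    apply Set.eq_of_subset_of_subset
    · intro x hx
      refine ⟨hDC hx, fun y hy hxy => ?_⟩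
      obtain ⟨z, hz, hyz⟩ := hCD y hy
      have hxz : x = z := by
        by_contra hne
        exact hanti hx hz hne (hxy.trans hyz)
      exact le_antisymm hxy (hxz ▸ hyz)
    · intro x hx
      obtain ⟨z, hz, hxz⟩ := hCD x (hMC hx)
      have := hx.2 z (hDC hz) hxz
      exact this ▸ hz
end

section
/- Necessity of Pareto-minimal sets: for any finite antichain C in a configuration space S and any c ∈ C, there exists a monotone cost function f : S → Q into some poset Q such that c is the unique optimum of f on C, i.e., f(c') ≺ f(c) for all c' ∈ C with c' ≠ c. -/
theorem necessity_of_pareto_minimal_sets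
    {S : Type} [PartialOrder S] (C : Set S) (hfin : C.Finite)
    (hC : IsAntichain (· ≤ ·) C) (c : S) (hc : c ∈ C) :
    ∃ (Q : Type) (iQ : PartialOrder Q) (f : S → Q),
      (∀ a b : S, a ≤ b → iQ.le (f a) (f b)) ∧
      (∀ c' ∈ C, c' ≠ c → iQ.lt (f c') (f c)) := by
  refine ⟨Prop, inferInstance, fun x => c ≤ x, ?_, ?_⟩
  · exact fun a b hab h => h.trans hab
  · intro c' hc' hne
    have hnot : ¬ c ≤ c' := hC hc hc' (fun h => hne h.symm)
    exact lt_iff_le_and_ne.mpr ⟨fun h => absurd h hnot,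
      by simp only [ne_eq, eq_iff_iff]; intro h; exact hnot (h.mpr le_rfl)⟩
end
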